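/- arXiv:2409.11679 — 3 statements merged into one kernel-verified Lean document; each statement's English description precedes it below -/
import Mathlib

section
/- Let H(K) be an RKHS on X, {x_1,...,x_N} distinct points of X, v = (c_1,...,c_N)ᵀ ∈ 𝔽^N, and Q = (K(x_i,x_j)). If w = (α_1,...,α_N)ᵀ satisfies v − Qw ∈ ker(Q), then the function f̂ = α_1 k_{x_1} + ... + α_N k_{x_N} minimizes the least square error Σ_{i=1}^N |f(x_i) − c_i|² over all f ∈ H(K). -/
/-- If `v - Q w` lies in the null space of the Gram matrix `Q = (K(x_i,x_j))`,
then `f̂ = ∑ α_i k_{x_i}` minimizes the least square error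
`∑ |f(x_i) - c_i|²` over all `f` in the RKHS.  The RKHS is modeled by its
feature map `k : X → H` with `f(x) = ⟨k x, f⟩`. -/
theorem stmt2 {X 𝕜 H : Type*} [RCLike 𝕜] [NormedAddCommGroup H] [InnerProductSpace 𝕜 H]
    [CompleteSpace H] (k : X → H) {N : ℕ} (x : Fin N → X) (hx : Function.Injective x)
    (Q : Matrix (Fin N) (Fin N) 𝕜)
    (hQdef : Q = Matrix.of fun i j => (inner 𝕜 (k (x i)) (k (x j)) : 𝕜))
    (c α : Fin N → 𝕜)
    (hw : (c - Q.mulVec α) ∈ LinearMap.ker Q.mulVecLin) :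
    ∀ f : H,
      ∑ i, ‖(inner 𝕜 (k (x i)) (∑ j, α j • k (x j)) : 𝕜) - c i‖ ^ 2 ≤
        ∑ i, ‖(inner 𝕜 (k (x i)) f : 𝕜) - c i‖ ^ 2 := by
  intro f
  set fh : H := ∑ j, α j • k (x j) with hfh
  set r : Fin N → 𝕜 := fun i => c i - Q.mulVec α i with hr
  have hQr : Q.mulVec r = 0 := by
    have := hw
    rw [LinearMap.mem_ker] at this
    exact (by simpa [Matrix.mulVecLin] using this : Q.mulVec (c - Q.mulVec α) = 0)
  have hval : ∀ (β : Fin N → 𝕜) (i : Fin N),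
      (inner 𝕜 (k (x i)) (∑ j, β j • k (x j)) : 𝕜) = Q.mulVec β i := by
    intro β i
    rw [inner_sum]
    simp only [inner_smul_right, hQdef, Matrix.mulVec, dotProduct, Matrix.of_apply]
    exact Finset.sum_congr rfl fun j _ => mul_comm _ _
  have hu : (∑ i, r i • k (x i)) = 0 := by
    rw [← inner_self_eq_zero (𝕜 := 𝕜), sum_inner]
    have : ∀ i ∈ Finset.univ, (inner 𝕜 (r i • k (x i)) (∑ j, r j • k (x j)) : 𝕜)
        = (starRingEnd 𝕜) (r i) * Q.mulVec r i := by
      intro i _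
      rw [inner_smul_left, hval r i]
    rw [Finset.sum_congr rfl this]
    simp [hQr]
  have hcross : ∀ g : H, ∑ i, (starRingEnd 𝕜) (r i) * (inner 𝕜 (k (x i)) g : 𝕜) = 0 := by
    intro g
    have : (inner 𝕜 (∑ i, r i • k (x i)) g : 𝕜) = ∑ i, (starRingEnd 𝕜) (r i) * (inner 𝕜 (k (x i)) g : 𝕜) := by
      rw [sum_inner]
      exact Finset.sum_congr rfl fun i _ => inner_smul_left _ _ _
    rw [← this, hu, inner_zero_left]
  have key : ∀ i, ‖(inner 𝕜 (k (x i)) f : 𝕜) - c i‖ ^ 2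
      = ‖(inner 𝕜 (k (x i)) (f - fh) : 𝕜)‖ ^ 2
        + 2 * RCLike.re ((inner 𝕜 ((inner 𝕜 (k (x i)) (f - fh) : 𝕜)) (-(r i)) : 𝕜))
        + ‖r i‖ ^ 2 := by
    intro i
    have hdec : (inner 𝕜 (k (x i)) f : 𝕜) - c i
        = (inner 𝕜 (k (x i)) (f - fh) : 𝕜) + (-(r i)) := by
      rw [inner_sub_right, hval α i]
      simp [hr]
    rw [hdec]
    have := norm_add_sq (𝕜 := 𝕜) ((inner 𝕜 (k (x i)) (f - fh) : 𝕜)) (-(r i))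
    simpa [norm_neg] using this
  have hLHS : ∀ i, ‖(inner 𝕜 (k (x i)) fh : 𝕜) - c i‖ ^ 2 = ‖r i‖ ^ 2 := by
    intro i
    rw [hval α i]
    simp [hr, norm_sub_rev]
  have h0' : ∑ i, (starRingEnd 𝕜) ((inner 𝕜 (k (x i)) (f - fh) : 𝕜)) * r i = 0 := by
    have h0 := hcross (f - fh)
    have := congrArg (starRingEnd 𝕜) h0
    simpa [map_sum, map_mul, mul_comm] using this
  have h2 : ∑ i, (inner 𝕜 ((inner 𝕜 (k (x i)) (f - fh) : 𝕜)) (-(r i)) : 𝕜) = 0 := by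
    calc ∑ i, (inner 𝕜 ((inner 𝕜 (k (x i)) (f - fh) : 𝕜)) (-(r i)) : 𝕜)
        = -∑ i, (starRingEnd 𝕜) ((inner 𝕜 (k (x i)) (f - fh) : 𝕜)) * r i := by
          simp [RCLike.inner_apply, mul_neg, mul_comm]
      _ = 0 := by rw [h0', neg_zero]
  have hcross0 : ∑ i, RCLike.re ((inner 𝕜 ((inner 𝕜 (k (x i)) (f - fh) : 𝕜)) (-(r i)) : 𝕜)) = 0 := by
    rw [← map_sum, h2, map_zero]
  calc ∑ i, ‖(inner 𝕜 (k (x i)) fh : 𝕜) - c i‖ ^ 2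
      = ∑ i, ‖r i‖ ^ 2 := Finset.sum_congr rfl fun i _ => hLHS i
    _ ≤ ∑ i, (‖(inner 𝕜 (k (x i)) (f - fh) : 𝕜)‖ ^ 2
          + 2 * RCLike.re ((inner 𝕜 ((inner 𝕜 (k (x i)) (f - fh) : 𝕜)) (-(r i)) : 𝕜))
          + ‖r i‖ ^ 2) := by
        rw [Finset.sum_add_distrib, Finset.sum_add_distrib, ← Finset.mul_sum, hcross0, mul_zero, add_zero]
        have : (0:ℝ) ≤ ∑ i, ‖(inner 𝕜 (k (x i)) (f - fh) : 𝕜)‖ ^ 2 :=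
          Finset.sum_nonneg fun i _ => by positivity
        linarith
    _ = ∑ i, ‖(inner 𝕜 (k (x i)) f : 𝕜) - c i‖ ^ 2 :=
        (Finset.sum_congr rfl fun i _ => (key i).symm)
end

section
/- Let H(K) be an RKHS on a Polish space X with feature map φ(x) = k_x, let μ be a Borel probability measure on X, 1 ≤ p < ∞, and g ∈ L^p(X,μ). Suppose {φ(x) : x ∈ X} is a continuous p-frame for H(K) with respect to μ. Then the infimum of ∫_X |f(x) − g(x)|^p dμ(x) over f ∈ H(K) is attained by some f̂ ∈ H(K). -/
open MeasureTheory

open NormedSpace in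

lemma aux_weak_compact_ball {𝕜 H : Type*} [RCLike 𝕜] [NormedAddCommGroup H]
    [InnerProductSpace 𝕜 H] [CompleteSpace H] (R : ℝ) :
    IsCompact (⇑(toWeakSpace 𝕜 H) '' Metric.closedBall (0 : H) R) := by
  set d := InnerProductSpace.toDual 𝕜 H
  have hcb : IsCompact (WeakDual.toStrongDual ⁻¹' Metric.closedBall (0 : StrongDual 𝕜 H) R) :=
    WeakDual.isCompact_closedBall 0 R
  set φ : WeakDual 𝕜 H → WeakSpace 𝕜 H :=
    fun ℓ => toWeakSpace 𝕜 H (d.symm (WeakDual.toStrongDual ℓ)) with hφ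
  have hφc : Continuous φ := by
    apply WeakBilin.continuous_of_continuous_eval
    intro y
    have key : ∀ ℓ : WeakDual 𝕜 H,
        ((topDualPairing 𝕜 H).flip (φ ℓ)) y = starRingEnd 𝕜 (ℓ (d.symm y)) := by
      intro ℓ
      have h1 : ((topDualPairing 𝕜 H).flip (φ ℓ)) y = y (d.symm (WeakDual.toStrongDual ℓ)) := rfl
      rw [h1]
      have h2 : y = d (d.symm y) := (d.apply_symm_apply y).symm
      conv_lhs => rw [h2]
      rw [InnerProductSpace.toDual_apply_apply]
      rw [← inner_conj_symm]
      congr 1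
      have h3 : (WeakDual.toStrongDual ℓ) = d (d.symm (WeakDual.toStrongDual ℓ)) :=
        (d.apply_symm_apply _).symm
      calc (inner 𝕜 (d.symm (WeakDual.toStrongDual ℓ)) (d.symm y) : 𝕜)
          = (d (d.symm (WeakDual.toStrongDual ℓ))) (d.symm y) := by
            rw [InnerProductSpace.toDual_apply_apply]
        _ = ℓ (d.symm y) := by rw [← h3]; rfl
    simp only [key]
    exact RCLike.continuous_conj.comp (WeakBilin.eval_continuous _ _)
  have himg : ⇑(toWeakSpace 𝕜 H) '' Metric.closedBall (0 : H) R =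
      φ '' (WeakDual.toStrongDual ⁻¹' Metric.closedBall (0 : StrongDual 𝕜 H) R) := by
    ext w
    constructor
    · rintro ⟨f, hf, rfl⟩
      refine ⟨WeakDual.toStrongDual.symm (d f), ?_, ?_⟩
      · simp only [Set.mem_preimage]
        simpa using by simpa [Metric.mem_closedBall, dist_zero_right] using
          (by rw [d.norm_map]; simpa [Metric.mem_closedBall, dist_zero_right] using hf :
            ‖d f‖ ≤ R)
      · show (toWeakSpace 𝕜 H) (d.symm (d f)) = _
        rw [d.symm_apply_apply]
    · rintro ⟨ℓ, hℓ, rfl⟩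
      refine ⟨d.symm (WeakDual.toStrongDual ℓ), ?_, rfl⟩
      have : ‖d.symm (WeakDual.toStrongDual ℓ)‖ = ‖(WeakDual.toStrongDual ℓ : StrongDual 𝕜 H)‖ :=
        d.symm.norm_map _
      simp only [Metric.mem_closedBall, dist_zero_right, this]
      simpa [Metric.mem_closedBall, dist_zero_right] using hℓ
  rw [himg]
  exact hcb.image hφc



/-- Existence of a best `L^p(μ)` approximation of `g` from the RKHS, assuming
the feature map `k` is a continuous `p`-frame with respect to the probability
measure `μ`.  The RKHS is modeled by its feature map `k : X → H` with
`f(x) = ⟨k x, f⟩`. -/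
theorem stmt4 {X : Type*} [TopologicalSpace X] [PolishSpace X] [MeasurableSpace X] [BorelSpace X]
    {𝕜 H : Type*} [RCLike 𝕜] [NormedAddCommGroup H] [InnerProductSpace 𝕜 H] [CompleteSpace H]
    [MeasurableSpace H] [BorelSpace H]
    (k : X → H) (hk : Measurable k) (μ : Measure X) [IsProbabilityMeasure μ]
    (p : ℝ) (hp : 1 ≤ p) (g : X → 𝕜) (hgm : Measurable g)
    (hg : Integrable (fun x => ‖g x‖ ^ p) μ)
    (A B : ℝ) (hA : 0 < A) (hAB : A ≤ B)
    (hframe : ∀ f : H,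
      A * ‖f‖ ^ p ≤ ∫ x, ‖(inner 𝕜 (k x) f : 𝕜)‖ ^ p ∂μ ∧
      ∫ x, ‖(inner 𝕜 (k x) f : 𝕜)‖ ^ p ∂μ ≤ B * ‖f‖ ^ p) :
    ∃ fhat : H, ∀ f : H,
      ∫ x, ‖(inner 𝕜 (k x) fhat : 𝕜) - g x‖ ^ p ∂μ ≤
        ∫ x, ‖(inner 𝕜 (k x) f : 𝕜) - g x‖ ^ p ∂μ := by
  have hp0 : (0:ℝ) < p := lt_of_lt_of_le one_pos hp
  have hp0' : p ≠ 0 := ne_of_gt hp0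
  letI : NormedSpace ℝ H := NormedSpace.restrictScalars ℝ 𝕜 H
  have hmeas : ∀ f : H, Measurable fun x => (inner 𝕜 (k x) f : 𝕜) := by
    intro f
    have hc : Continuous fun y : H => (inner 𝕜 y f : 𝕜) := continuous_id.inner continuous_const
    exact hc.measurable.comp hk
  set F : H → X → ℝ := fun f x => ‖(inner 𝕜 (k x) f : 𝕜) - g x‖ ^ p with hFdef
  set Φ : H → ℝ := fun f => ∫ x, F f x ∂μ with hΦdef
  have hFm : ∀ f, Measurable (F f) := fun f =>
    (Real.continuous_rpow_const hp0.le).measurable.comp ((hmeas f).sub hgm).norm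
  -- two-point rpow bound
  have hpow2 : ∀ a b : ℝ, 0 ≤ a → 0 ≤ b → (a + b) ^ p ≤ 2 ^ p * (a ^ p + b ^ p) := by
    intro a b ha hb
    have h2p : (0:ℝ) ≤ 2 ^ p := Real.rpow_nonneg (by norm_num) p
    have h1 : a + b ≤ 2 * max a b := by
      rcases le_total a b with h|h
      · rw [max_eq_right h]; linarith
      · rw [max_eq_left h]; linarith
    have h2 : (a + b) ^ p ≤ (2 * max a b) ^ p :=
      Real.rpow_le_rpow (by linarith) h1 hp0.le
    have h3 : (2 * max a b) ^ p = 2 ^ p * (max a b) ^ p :=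
      Real.mul_rpow (by norm_num) (le_max_of_le_left ha)
    have h4 : (max a b) ^ p ≤ a ^ p + b ^ p := by
      rcases le_total a b with h|h
      · rw [max_eq_right h]
        have := Real.rpow_nonneg ha p; linarith
      · rw [max_eq_left h]
        have := Real.rpow_nonneg hb p; linarith
    calc (a+b)^p ≤ 2^p * (max a b)^p := by rw [← h3]; exact h2
      _ ≤ 2^p*(a^p+b^p) := mul_le_mul_of_nonneg_left h4 h2p
  have hNint : ∀ f : H, Integrable (fun x => ‖(inner 𝕜 (k x) f : 𝕜)‖ ^ p) μ := by
    intro f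
    rcases eq_or_ne f 0 with rfl | hf
    · have he : (fun x => ‖(inner 𝕜 (k x) (0:H) : 𝕜)‖ ^ p) = fun _ => (0:ℝ) := by
        funext x; simp [Real.zero_rpow hp0']
      rw [he]; exact integrable_const 0
    · by_contra h
      have h1 := (hframe f).1
      rw [integral_undef h] at h1
      have : 0 < A * ‖f‖ ^ p := mul_pos hA (Real.rpow_pos_of_pos (norm_pos_iff.mpr hf) p)
      linarith
  have hFbound : ∀ f x, F f x ≤ 2 ^ p * (‖(inner 𝕜 (k x) f : 𝕜)‖ ^ p + ‖g x‖ ^ p) := by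
    intro f x
    have h1 : ‖(inner 𝕜 (k x) f : 𝕜) - g x‖ ≤ ‖(inner 𝕜 (k x) f : 𝕜)‖ + ‖g x‖ := norm_sub_le _ _
    exact le_trans (Real.rpow_le_rpow (norm_nonneg _) h1 hp0.le)
      (hpow2 _ _ (norm_nonneg _) (norm_nonneg _))
  have hNbound : ∀ f x, ‖(inner 𝕜 (k x) f : 𝕜)‖ ^ p ≤ 2 ^ p * (F f x + ‖g x‖ ^ p) := by
    intro f x
    have h1 : ‖(inner 𝕜 (k x) f : 𝕜)‖ ≤ ‖(inner 𝕜 (k x) f : 𝕜) - g x‖ + ‖g x‖ := by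
      have := norm_add_le ((inner 𝕜 (k x) f : 𝕜) - g x) (g x)
      simpa using this
    exact le_trans (Real.rpow_le_rpow (norm_nonneg _) h1 hp0.le)
      (hpow2 _ _ (norm_nonneg _) (norm_nonneg _))
  have hFint : ∀ f, Integrable (F f) μ := by
    intro f
    refine Integrable.mono' (((hNint f).add hg).const_mul (2^p)) (hFm f).aestronglyMeasurable ?_
    refine Filter.Eventually.of_forall fun x => ?_
    rw [Real.norm_of_nonneg (Real.rpow_nonneg (norm_nonneg _) p)]
    exact hFbound f x
  have hΦ0 : ∀ f, 0 ≤ Φ f := fun f => integral_nonneg fun x => Real.rpow_nonneg (norm_nonneg _) _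
  set G := ∫ x, ‖g x‖ ^ p ∂μ with hGdef
  have hG0 : 0 ≤ G := integral_nonneg fun x => Real.rpow_nonneg (norm_nonneg _) _
  set R : ℝ := (2 ^ p * (Φ 0 + G) / A) ^ p⁻¹ with hRdef
  have hcoer : ∀ f : H, Φ f ≤ Φ 0 → ‖f‖ ≤ R := by
    intro f hfc
    have h2p : (0:ℝ) ≤ 2 ^ p := Real.rpow_nonneg (by norm_num) p
    have h1 : A * ‖f‖ ^ p ≤ ∫ x, ‖(inner 𝕜 (k x) f:𝕜)‖^p ∂μ := (hframe f).1
    have h2 : ∫ x, ‖(inner 𝕜 (k x) f:𝕜)‖^p ∂μ ≤ ∫ x, 2^p * (F f x + ‖g x‖^p) ∂μ :=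
      integral_mono (hNint f) (((hFint f).add hg).const_mul _) (fun x => hNbound f x)
    have h3 : ∫ x, 2^p * (F f x + ‖g x‖^p) ∂μ = 2^p * (Φ f + G) := by
      rw [integral_const_mul, integral_add (hFint f) hg]
    have h4 : ‖f‖ ^ p ≤ 2^p * (Φ 0 + G) / A := by
      rw [le_div_iff₀ hA]
      have h5 : 2^p * (Φ f + G) ≤ 2^p * (Φ 0 + G) :=
        mul_le_mul_of_nonneg_left (by linarith) h2p
      calc ‖f‖ ^ p * A = A * ‖f‖ ^ p := mul_comm _ _
        _ ≤ 2^p * (Φ f + G) := by rw [← h3]; exact le_trans h1 h2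
        _ ≤ 2^p * (Φ 0 + G) := h5
    calc ‖f‖ = (‖f‖ ^ p) ^ p⁻¹ := (Real.rpow_rpow_inv (norm_nonneg f) hp0').symm
      _ ≤ R := Real.rpow_le_rpow (Real.rpow_nonneg (norm_nonneg f) p) h4 (inv_nonneg.2 hp0.le)
  -- convexity
  have hconvineq : ∀ (f h : H) (a b : ℝ), 0 ≤ a → 0 ≤ b → a + b = 1 →
      Φ (a • f + b • h) ≤ a * Φ f + b * Φ h := by
    intro f h a b ha hb hab
    have hpt : ∀ x, F (a • f + b • h) x ≤ a * F f x + b * F h x := by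
      intro x
      have hab' : ((a:𝕜) + (b:𝕜)) = 1 := by
        have : ((a+b : ℝ) : 𝕜) = ((1:ℝ) : 𝕜) := by rw [hab]
        push_cast at this; simpa using this
      have e1 : (inner 𝕜 (k x) (a • f + b • h) : 𝕜) - g x
          = (a:𝕜) • ((inner 𝕜 (k x) f : 𝕜) - g x) + (b:𝕜) • ((inner 𝕜 (k x) h : 𝕜) - g x) := by
        rw [inner_add_right, RCLike.real_smul_eq_coe_smul (K := 𝕜) a f,
          RCLike.real_smul_eq_coe_smul (K := 𝕜) b h, inner_smul_right, inner_smul_right,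
          smul_eq_mul, smul_eq_mul]
        linear_combination (g x) * hab'
      have e2 : ‖(inner 𝕜 (k x) (a • f + b • h) : 𝕜) - g x‖
          ≤ a * ‖(inner 𝕜 (k x) f : 𝕜) - g x‖ + b * ‖(inner 𝕜 (k x) h : 𝕜) - g x‖ := by
        rw [e1]
        refine le_trans (norm_add_le _ _) ?_
        rw [norm_smul, norm_smul]
        have hna : ‖(a:𝕜)‖ = a := by rw [RCLike.norm_ofReal, abs_of_nonneg ha]
        have hnb : ‖(b:𝕜)‖ = b := by rw [RCLike.norm_ofReal, abs_of_nonneg hb]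
        rw [hna, hnb]
      have e3 := (convexOn_rpow hp).2 (Set.mem_Ici.2 (norm_nonneg ((inner 𝕜 (k x) f : 𝕜) - g x)))
        (Set.mem_Ici.2 (norm_nonneg ((inner 𝕜 (k x) h : 𝕜) - g x))) ha hb hab
      simp only [smul_eq_mul] at e3
      calc F (a • f + b • h) x
          ≤ (a * ‖(inner 𝕜 (k x) f : 𝕜) - g x‖ + b * ‖(inner 𝕜 (k x) h : 𝕜) - g x‖) ^ p :=
            Real.rpow_le_rpow (norm_nonneg _) e2 hp0.le
        _ ≤ a * F f x + b * F h x := e3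
    have hint : Φ (a • f + b • h) ≤ ∫ x, (a * F f x + b * F h x) ∂μ :=
      integral_mono (hFint _)
        ((((hFint f).const_mul a).add ((hFint h).const_mul b) :
          Integrable (fun x => a * F f x + b * F h x) μ)) hpt
    rwa [integral_add ((hFint f).const_mul a) ((hFint h).const_mul b),
      integral_const_mul, integral_const_mul] at hint
  have hconv : ∀ c, Convex ℝ {f : H | Φ f ≤ c} := by
    intro c f hf h hh a b ha hb hab
    simp only [Set.mem_setOf_eq] at hf hh ⊢
    have hmain := hconvineq f h a b ha hb hab
    have habc : a * c + b * c = c := by rw [← add_mul, hab, one_mul]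
    have e1 : a * Φ f ≤ a * c := mul_le_mul_of_nonneg_left hf ha
    have e2 : b * Φ h ≤ b * c := mul_le_mul_of_nonneg_left hh hb
    linarith
  -- closedness of sublevel sets
  have hclosed : ∀ c, IsClosed {f : H | Φ f ≤ c} := by
    intro c
    apply IsSeqClosed.isClosed
    intro fn f hfn hlim
    simp only [Set.mem_setOf_eq] at hfn ⊢
    rcases le_or_gt 0 c with hc | hc
    swap
    · exact absurd (lt_of_le_of_lt (hfn 0) hc) (not_lt.2 (hΦ0 (fn 0)))
    have hten : ∀ x, Filter.Tendsto (fun n => ENNReal.ofReal (F (fn n) x)) Filter.atTop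
        (nhds (ENNReal.ofReal (F f x))) := by
      intro x
      have hcont : Continuous fun f' : H => F f' x := by
        refine Continuous.rpow_const ?_ (fun _ => Or.inr hp0.le)
        exact ((continuous_const.inner continuous_id).sub continuous_const).norm
      exact (ENNReal.continuous_ofReal.tendsto _).comp ((hcont.tendsto f).comp hlim)
    have hkey : ENNReal.ofReal (Φ f) ≤ ENNReal.ofReal c := by
      have e1 : ENNReal.ofReal (Φ f) = ∫⁻ x, ENNReal.ofReal (F f x) ∂μ :=
        ofReal_integral_eq_lintegral_ofReal (hFint f)
          (Filter.Eventually.of_forall fun x => Real.rpow_nonneg (norm_nonneg _) _)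
      rw [e1]
      calc ∫⁻ x, ENNReal.ofReal (F f x) ∂μ
          = ∫⁻ x, Filter.liminf (fun n => ENNReal.ofReal (F (fn n) x)) Filter.atTop ∂μ :=
            lintegral_congr fun x => ((hten x).liminf_eq).symm
        _ ≤ Filter.liminf (fun n => ∫⁻ x, ENNReal.ofReal (F (fn n) x) ∂μ) Filter.atTop :=
            lintegral_liminf_le fun n => (hFm (fn n)).ennreal_ofReal
        _ ≤ ENNReal.ofReal c := by
            refine le_trans Filter.liminf_le_limsup (Filter.limsup_le_of_le (by isBoundedDefault) ?_)
            refine Filter.Eventually.of_forall fun n => ?_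
            rw [← ofReal_integral_eq_lintegral_ofReal (hFint (fn n))
              (Filter.Eventually.of_forall fun x => Real.rpow_nonneg (norm_nonneg _) _)]
            exact ENNReal.ofReal_le_ofReal (hfn n)
    exact (ENNReal.ofReal_le_ofReal_iff hc).1 hkey
  -- weak closedness
  have hwclosed : ∀ c, IsClosed (⇑(toWeakSpace 𝕜 H) '' {f : H | Φ f ≤ c}) := by
    intro c
    have h1 := (hconv c).toWeakSpace_closure (𝕜 := 𝕜)
    rw [(hclosed c).closure_eq] at h1
    rw [h1]; exact isClosed_closure
  -- minimization
  have hmem0 : (0:H) ∈ {f : H | Φ f ≤ Φ 0} := by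
    simp only [Set.mem_setOf_eq]
    exact le_rfl
  have hSne : (Φ '' {f : H | Φ f ≤ Φ 0}).Nonempty := ⟨Φ 0, 0, hmem0, rfl⟩
  have hbdd : BddBelow (Φ '' {f : H | Φ f ≤ Φ 0}) := by
    refine ⟨0, ?_⟩
    rintro y ⟨f, _, rfl⟩
    exact hΦ0 f
  set m : ℝ := sInf (Φ '' {f : H | Φ f ≤ Φ 0}) with hmdef
  set S : ℕ → Set H := fun n => {f : H | Φ f ≤ min (Φ 0) (m + 1/(n+1))} with hSdef
  set T : ℕ → Set (WeakSpace 𝕜 H) := fun n => ⇑(toWeakSpace 𝕜 H) '' S n with hTdef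
  have hSmin : ∀ n : ℕ, ∃ f : H, Φ f ≤ Φ 0 ∧ Φ f < m + 1/(n+1) := by
    intro n
    have hpos : (0:ℝ) < 1/(n+1) := by positivity
    obtain ⟨y, ⟨f, hf, rfl⟩, hy⟩ := exists_lt_of_csInf_lt hSne (lt_add_of_pos_right m hpos)
    exact ⟨f, hf, hy⟩
  have hTne : ∀ n, (T n).Nonempty := by
    intro n
    obtain ⟨f, hf1, hf2⟩ := hSmin n
    exact ⟨toWeakSpace 𝕜 H f, f, le_min hf1 hf2.le, rfl⟩
  have hTclosed : ∀ n, IsClosed (T n) := fun n => hwclosed _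
  have hSsub : ∀ n, S n ⊆ Metric.closedBall (0:H) R := by
    intro n f hf
    rw [Metric.mem_closedBall, dist_zero_right]
    exact hcoer f (le_trans hf (min_le_left _ _))
  have hT0 : IsCompact (T 0) :=
    IsCompact.of_isClosed_subset (aux_weak_compact_ball R) (hTclosed 0)
      (Set.image_mono (hSsub 0))
  have hTanti : ∀ n, T (n+1) ⊆ T n := by
    intro n
    refine Set.image_mono ?_
    intro f hf
    simp only [hSdef, Set.mem_setOf_eq] at hf ⊢
    refine le_trans hf (min_le_min (le_refl _) ?_)
    have h5 : (1:ℝ)/((n:ℝ)+1+1) ≤ 1/((n:ℝ)+1) := by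
      apply one_div_le_one_div_of_le <;> [positivity; linarith]
    push_cast
    linarith
  obtain ⟨w, hw⟩ := IsCompact.nonempty_iInter_of_sequence_nonempty_isCompact_isClosed
    T hTanti hTne hT0 hTclosed
  set fhat : H := (toWeakSpace 𝕜 H).symm w with hfhatdef
  have hfhatn : ∀ n : ℕ, Φ fhat ≤ min (Φ 0) (m + 1/(n+1)) := by
    intro n
    obtain ⟨f', hf', hfw⟩ := Set.mem_iInter.1 hw n
    have hef : f' = fhat := by rw [hfhatdef, ← hfw, LinearEquiv.symm_apply_apply]
    simp only [hSdef, Set.mem_setOf_eq] at hf'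
    rwa [← hef]
  have h1 : Φ fhat ≤ m := by
    refine le_of_forall_pos_le_add fun ε hε => ?_
    obtain ⟨n, hn⟩ := exists_nat_one_div_lt hε
    refine le_trans (le_trans (hfhatn n) (min_le_right _ _)) ?_
    have : (1:ℝ)/(n+1) ≤ ε := by
      linarith
    linarith
  have h2 : Φ fhat ≤ Φ 0 := le_trans (hfhatn 0) (min_le_left _ _)
  refine ⟨fhat, fun f => ?_⟩
  show Φ fhat ≤ Φ f
  rcases le_or_gt (Φ f) (Φ 0) with hf | hf
  · exact le_trans h1 (csInf_le hbdd ⟨f, hf, rfl⟩)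
  · exact le_trans h2 hf.le
end

section
/- Let H(K) be an RKHS on a Polish space X, μ a Borel probability measure, 0 < p < ∞, g and c satisfying: c(0,g(·)) ∈ L¹(μ), c(·,z) lower semicontinuous and convex, and p > 1. Then the unique minimizer f̂ of f ↦ ∫_X c(f(x),g(x)) dμ(x) + ‖f‖_{H(K)}^p lies in the closure of the linear span of {k_x : x ∈ supp(μ)}. -/
open MeasureTheory

/-- The topological support of a Borel measure: points all of whose
neighborhoods have positive measure. -/
def msupport {X : Type*} [TopologicalSpace X] [MeasurableSpace X] (μ : Measure X) : Set X :=
  {x | ∀ U ∈ nhds x, μ U ≠ 0}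

lemma msupport_compl_null {X : Type*} [TopologicalSpace X] [SecondCountableTopology X]
    [MeasurableSpace X] (μ : Measure X) : μ (msupport μ)ᶜ = 0 := by
  set S : Set (Set X) := {U | IsOpen U ∧ μ U = 0} with hS
  obtain ⟨T, hTc, hTS, hTU⟩ := TopologicalSpace.isOpen_sUnion_countable S (fun U hU => hU.1)
  have hsub : (msupport μ)ᶜ ⊆ ⋃₀ S := by
    intro x hx
    simp only [msupport, Set.mem_compl_iff, Set.mem_setOf_eq, not_forall] at hx
    obtain ⟨U, hU, hUnull⟩ := hx
    push_neg at hUnull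
    obtain ⟨V, hVU, hVopen, hxV⟩ := mem_nhds_iff.1 hU
    exact ⟨V, ⟨hVopen, measure_mono_null hVU hUnull⟩, hxV⟩
  have : μ (⋃₀ T) = 0 :=
    (measure_sUnion_null_iff hTc).2 fun s hs => (hTS hs).2
  exact measure_mono_null (hTU ▸ hsub) this

/-- Discrete probabilistic representer theorem: the unique minimizer of the
regularized problem `∫ c(f(x),g(x)) dμ + ‖f‖^p` (with `p > 1`, `c(·,z)` convex
and lower semicontinuous, `c(0,g(·)) ∈ L¹(μ)`) lies in the closure of the
linear span of `{k_x : x ∈ supp μ}`.  The RKHS is modeled by its feature map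
`k : X → H` with `f(x) = ⟨k x, f⟩`. -/
theorem stmt10 {X : Type*} [TopologicalSpace X] [PolishSpace X] [MeasurableSpace X] [BorelSpace X]
    {𝕜 H : Type*} [RCLike 𝕜] [NormedAddCommGroup H] [InnerProductSpace 𝕜 H] [CompleteSpace H]
    [MeasurableSpace H] [BorelSpace H]
    (k : X → H) (hk : Measurable k) (μ : Measure X) [IsProbabilityMeasure μ]
    (p : ℝ) (hp : 1 < p) (g : X → 𝕜) (hgm : Measurable g)
    (c : 𝕜 → 𝕜 → ℝ) (hc0 : ∀ y z, 0 ≤ c y z)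
    (hcm : Measurable (Function.uncurry c))
    (hlsc : ∀ z : 𝕜, LowerSemicontinuous fun y => c y z)
    (hconv : ∀ z : 𝕜, ConvexOn ℝ Set.univ fun y => c y z)
    (hint : Integrable (fun x => c 0 (g x)) μ)
    (fhat : H)
    (hmin : ∀ f : H, (∫ x, c (inner 𝕜 (k x) fhat : 𝕜) (g x) ∂μ) + ‖fhat‖ ^ p ≤
        (∫ x, c (inner 𝕜 (k x) f : 𝕜) (g x) ∂μ) + ‖f‖ ^ p) :
    fhat ∈ (Submodule.span 𝕜 (k '' msupport μ)).topologicalClosure := by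
  set Ω : Submodule 𝕜 H := (Submodule.span 𝕜 (k '' msupport μ)).topologicalClosure with hΩ
  set Pf : H := (Submodule.orthogonalProjectionOnto Ω fhat : H) with hPf
  have hPmem : Pf ∈ Ω := (Submodule.orthogonalProjectionOnto Ω fhat).2
  -- on the support, the values of fhat and Pf agree
  have hval : ∀ x ∈ msupport μ, (inner 𝕜 (k x) Pf : 𝕜) = inner 𝕜 (k x) fhat := by
    intro x hx
    have hkx : k x ∈ Ω :=
      Submodule.le_topologicalClosure _ (Submodule.subset_span ⟨x, hx, rfl⟩)
    have h0 : (inner 𝕜 (fhat - Pf) (k x) : 𝕜) = 0 :=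
      Submodule.starProjection_inner_eq_zero (K := Ω) fhat (k x) hkx
    have h0' : (inner 𝕜 (k x) (fhat - Pf) : 𝕜) = 0 := by
      rw [← inner_conj_symm, h0, map_zero]
    rw [inner_sub_right] at h0'
    linear_combination -h0'
  -- the integrals agree
  have hIeq : (∫ x, c (inner 𝕜 (k x) Pf : 𝕜) (g x) ∂μ) =
      ∫ x, c (inner 𝕜 (k x) fhat : 𝕜) (g x) ∂μ := by
    refine integral_congr_ae ?_
    have hae : ∀ᵐ x ∂μ, x ∈ msupport μ := by
      rw [ae_iff]
      exact msupport_compl_null μ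
    filter_upwards [hae] with x hx
    rw [hval x hx]
  -- hence ‖fhat‖ ≤ ‖Pf‖
  have hle : ‖fhat‖ ≤ ‖Pf‖ := by
    by_contra hlt
    push_neg at hlt
    have := hmin Pf
    rw [hIeq] at this
    have hpow : ‖fhat‖ ^ p ≤ ‖Pf‖ ^ p := le_of_add_le_add_left this
    have : ‖Pf‖ ^ p < ‖fhat‖ ^ p :=
      Real.rpow_lt_rpow (norm_nonneg _) hlt (lt_trans one_pos hp)
    linarith
  -- Pythagoras : ‖fhat‖² = ‖fhat - Pf‖² + ‖Pf‖²
  have h0 : (inner 𝕜 (fhat - Pf) Pf : 𝕜) = 0 :=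
    Submodule.starProjection_inner_eq_zero (K := Ω) fhat Pf hPmem
  have hpyth : ‖fhat‖ ^ 2 = ‖fhat - Pf‖ ^ 2 + ‖Pf‖ ^ 2 := by
    have := norm_add_sq (𝕜 := 𝕜) (fhat - Pf) Pf
    simp only [sub_add_cancel, h0, map_zero, mul_zero] at this
    linarith
  have hnorm : ‖fhat - Pf‖ = 0 := by
    have h2 : ‖Pf‖ ≤ ‖fhat‖ := by
      nlinarith [norm_nonneg (fhat - Pf), norm_nonneg Pf, norm_nonneg fhat]
    have heq : ‖fhat‖ = ‖Pf‖ := le_antisymm hle h2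
    have h3 : ‖fhat - Pf‖ ^ 2 = 0 := by rw [heq] at hpyth; linarith
    exact pow_eq_zero_iff two_ne_zero |>.1 h3
  have : fhat = Pf := sub_eq_zero.1 (norm_eq_zero.1 hnorm)
  rw [this]
  exact hPmem
end
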